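/- arXiv:2301.00237 — 9 statements merged into one kernel-verified Lean document; each statement's English description precedes it below -/
import Mathlib

section
/- If B1 and B2' hold for a collection B of subsets of a finite set X, then the standard base exchange property B2 holds: for all X1, X2 in B and x1 in X1 \ X2, there exists x2 in X2 \ X1 such that (X1 \ {x1}) ∪ {x2} ∈ B. -/
/-- Property B2': for all `X₁, X₂ ∈ B` and `x₁ ∈ X₁ \ X₂` there exist `x₂ ∈ X₂ \ X₁`
and `Y ∈ B` with `(X₁ \ {x₁}) ∪ {x₂} ⊆ Y`. -/
def B2' {α : Type*} [DecidableEq α] (B : Set (Finset α)) : Prop :=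
  ∀ X₁ ∈ B, ∀ X₂ ∈ B, ∀ x₁ ∈ X₁ \ X₂,
    ∃ x₂ ∈ X₂ \ X₁, ∃ Y ∈ B, insert x₂ (X₁.erase x₁) ⊆ Y

/-- B1 and B2' imply the standard base exchange property B2. -/
theorem B2_of_B1_B2' {α : Type*} [DecidableEq α] [Fintype α] (B : Set (Finset α))
    (hB1 : B.Nonempty) (hB2' : B2' B) :
    ∀ X₁ ∈ B, ∀ X₂ ∈ B, ∀ x₁ ∈ X₁ \ X₂,
      ∃ x₂ ∈ X₂ \ X₁, insert x₂ (X₁.erase x₁) ∈ B := by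
  -- Antichain lemma: if X ⊆ Y are both in B, then X = Y.
  have anti : ∀ X ∈ B, ∀ Y ∈ B, X ⊆ Y → X = Y := by
    intro X hX Y hY hXY
    by_contra hne
    obtain ⟨y, hyY, hyX⟩ := Finset.exists_of_ssubset (lt_of_le_of_ne hXY hne)
    obtain ⟨z, hz, -⟩ := hB2' Y hY X hX y (Finset.mem_sdiff.mpr ⟨hyY, hyX⟩)
    exact (Finset.mem_sdiff.mp hz).2 (hXY (Finset.mem_sdiff.mp hz).1)
  intro X₁ hX₁ X₂ hX₂ x₁ hx₁
  obtain ⟨hx₁X₁, hx₁X₂⟩ := Finset.mem_sdiff.mp hx₁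
  obtain ⟨x₂, hx₂, Y, hY, hZY⟩ := hB2' X₁ hX₁ X₂ hX₂ x₁ hx₁
  obtain ⟨hx₂X₂, hx₂X₁⟩ := Finset.mem_sdiff.mp hx₂
  refine ⟨x₂, hx₂, ?_⟩
  have herase : X₁.erase x₁ ⊆ Y := (Finset.subset_insert _ _).trans hZY
  -- x₁ ∉ Y
  have hx₁Y : x₁ ∉ Y := by
    intro h
    have : X₁ ⊆ Y := by
      intro a ha
      by_cases hax : a = x₁
      · exact hax ▸ h
      · exact herase (Finset.mem_erase.mpr ⟨hax, ha⟩)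
    have := anti X₁ hX₁ Y hY this
    exact hx₂X₁ (this ▸ hZY (Finset.mem_insert_self _ _))
  -- apply B2' to Y, X₁ with x₂ ∈ Y \ X₁
  have hx₂Y : x₂ ∈ Y := hZY (Finset.mem_insert_self _ _)
  obtain ⟨z, hz, Y', hY', hZ'Y'⟩ := hB2' Y hY X₁ hX₁ x₂
    (Finset.mem_sdiff.mpr ⟨hx₂Y, hx₂X₁⟩)
  obtain ⟨hzX₁, hzY⟩ := Finset.mem_sdiff.mp hz
  have hzx₁ : z = x₁ := by
    by_contra h
    exact hzY (herase (Finset.mem_erase.mpr ⟨h, hzX₁⟩))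
  subst hzx₁
  -- X₁ ⊆ Y'
  have hX₁Y' : X₁ ⊆ Y' := by
    intro a ha
    by_cases hax : a = z
    · exact hax ▸ hZ'Y' (Finset.mem_insert_self _ _)
    · have haY : a ∈ Y := herase (Finset.mem_erase.mpr ⟨hax, ha⟩)
      have : a ≠ x₂ := fun h => hx₂X₁ (h ▸ ha)
      exact hZ'Y' (Finset.mem_insert_of_mem (Finset.mem_erase.mpr ⟨this, haY⟩))
  have hX₁eq : X₁ = Y' := anti X₁ hX₁ Y' hY' hX₁Y'
  -- Y ⊆ insert x₂ (X₁.erase z)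
  have hYZ : Y ⊆ insert x₂ (X₁.erase z) := by
    intro a haY
    by_cases hax : a = x₂
    · exact hax ▸ Finset.mem_insert_self _ _
    · have : a ∈ Y' := hZ'Y' (Finset.mem_insert_of_mem (Finset.mem_erase.mpr ⟨hax, haY⟩))
      have haX₁ : a ∈ X₁ := hX₁eq ▸ this
      have : a ≠ z := fun h => hx₁Y (h ▸ haY)
      exact Finset.mem_insert_of_mem (Finset.mem_erase.mpr ⟨this, haX₁⟩)
  have : Y = insert x₂ (X₁.erase z) := Finset.Subset.antisymm hYZ hZY
  exact this ▸ hY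
end

section
/- The set of maximal elements of a nonempty finite M♮-convex set of nonnegative integer vectors is an M-convex set. -/
/-!
Against a maximal `ξ'`, the first alternative of M♮-exchange would put `ξ' + χᵢ > ξ'` into `Ξ`,
so only the M-exchange alternative survives. Every maximal `ξ'` has the largest coordinate sum
in `Ξ`: if `ξ ∈ Ξ` had a larger sum, some `ξ i > ξ' i`, and the exchange `ξ - χᵢ + χⱼ` keeps the
sum while moving strictly closer to `ξ'` in `ℓ¹`, so induction on that distance gives a
contradiction. Elements of largest sum are maximal, and both exchanged vectors keep the sums of
the maximal vectors they came from.
-/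

/-- Unit vector at coordinate `i`. -/
def unitv {I : Type*} [DecidableEq I] (i : I) : I → ℤ := fun k => if k = i then 1 else 0

/-- `Ξ` is an M♮-convex set of integer vectors. -/
def MNatConvex {I : Type*} [DecidableEq I] (Ξ : Set (I → ℤ)) : Prop :=
  ∀ ξ ∈ Ξ, ∀ ξ' ∈ Ξ, ∀ i : I, ξ' i < ξ i →
    ((ξ - unitv i ∈ Ξ ∧ ξ' + unitv i ∈ Ξ) ∨
      ∃ j : I, ξ j < ξ' j ∧ ξ - unitv i + unitv j ∈ Ξ ∧ ξ' + unitv i - unitv j ∈ Ξ)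

/-- `Ξ` is an M-convex set of integer vectors. -/
def MConvex {I : Type*} [DecidableEq I] (Ξ : Set (I → ℤ)) : Prop :=
  ∀ ξ ∈ Ξ, ∀ ξ' ∈ Ξ, ∀ i : I, ξ' i < ξ i →
    ∃ j : I, ξ j < ξ' j ∧ ξ - unitv i + unitv j ∈ Ξ ∧ ξ' + unitv i - unitv j ∈ Ξ

lemma maximal_mem_iff_forall_eq {α : Type*} [PartialOrder α] {s : Set α} {x : α} :
    Maximal (· ∈ s) x ↔ x ∈ s ∧ ∀ y ∈ s, x ≤ y → y = x := by
  simp only [maximal_iff, eq_comm (a := x)]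

section

variable {I : Type*} [DecidableEq I]

lemma lt_add_unitv (ξ : I → ℤ) (i : I) : ξ < ξ + unitv i :=
  Pi.lt_def.2 ⟨fun k => by simp only [Pi.add_apply, unitv]; split <;> omega, i, by simp [unitv]⟩

lemma sum_unitv [Fintype I] (i : I) : ∑ k, unitv i k = 1 := by
  simp [unitv]

lemma sum_sub_unitv_add_unitv [Fintype I] (ξ : I → ℤ) (i j : I) :
    ∑ k, (ξ - unitv i + unitv j) k = ∑ k, ξ k := by
  simp [Finset.sum_add_distrib, Finset.sum_sub_distrib, sum_unitv]

lemma sum_add_unitv_sub_unitv [Fintype I] (ξ : I → ℤ) (i j : I) :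
    ∑ k, (ξ + unitv i - unitv j) k = ∑ k, ξ k := by
  simp [Finset.sum_add_distrib, Finset.sum_sub_distrib, sum_unitv]

lemma l1_sub_unitv_add_unitv_lt [Fintype I] {ξ ξ' : I → ℤ} {i j : I}
    (hi : ξ' i < ξ i) (hj : ξ j < ξ' j) :
    ∑ k, ((ξ - unitv i + unitv j) k - ξ' k).natAbs < ∑ k, (ξ k - ξ' k).natAbs := by
  have hij : i ≠ j := by rintro rfl; omega
  refine Finset.sum_lt_sum (fun k _ => ?_) ⟨i, Finset.mem_univ i, ?_⟩
  all_goals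
    simp only [Pi.add_apply, Pi.sub_apply, unitv]
    split_ifs <;> subst_vars <;> omega

namespace MNatConvex

variable {Ξ : Set (I → ℤ)} {ξ ξ' : I → ℤ} {i : I}

lemma exists_exchange_of_maximal (hM : MNatConvex Ξ) (hξ : ξ ∈ Ξ)
    (hξ' : Maximal (· ∈ Ξ) ξ') (hi : ξ' i < ξ i) :
    ∃ j, ξ j < ξ' j ∧ ξ - unitv i + unitv j ∈ Ξ ∧ ξ' + unitv i - unitv j ∈ Ξ := by
  refine (hM ξ hξ ξ' hξ'.prop i hi).resolve_left fun ⟨_, hadd⟩ => ?_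
  exact (lt_add_unitv ξ' i).ne' (hξ'.eq_of_ge hadd (lt_add_unitv ξ' i).le)

lemma sum_le_of_maximal [Fintype I] (hM : MNatConvex Ξ) (hξ' : Maximal (· ∈ Ξ) ξ')
    (hξ : ξ ∈ Ξ) : ∑ k, ξ k ≤ ∑ k, ξ' k := by
  induction hd : ∑ k, (ξ k - ξ' k).natAbs using Nat.strong_induction_on generalizing ξ with
  | _ d ih =>
    by_contra! hlt
    obtain ⟨i, -, hi⟩ := Finset.exists_lt_of_sum_lt hlt
    obtain ⟨j, hj, hη, -⟩ := hM.exists_exchange_of_maximal hξ hξ' hi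
    have := ih _ (hd ▸ l1_sub_unitv_add_unitv_lt hi hj) hη rfl
    rw [sum_sub_unitv_add_unitv] at this
    exact this.not_gt hlt

lemma maximal_of_sum_eq [Fintype I] (hM : MNatConvex Ξ) (hξ : Maximal (· ∈ Ξ) ξ)
    {η : I → ℤ} (hη : η ∈ Ξ) (hsum : ∑ k, η k = ∑ k, ξ k) : Maximal (· ∈ Ξ) η := by
  refine ⟨hη, fun ζ hζ hle => by_contra fun hnle => ?_⟩
  have hlt : ∑ k, η k < ∑ k, ζ k := Fintype.sum_strictMono (hle.lt_of_not_ge hnle)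
  exact hlt.not_ge (hsum ▸ hM.sum_le_of_maximal hξ hζ)

end MNatConvex

end

theorem maximal_of_MNatConvex_is_MConvex_general {I : Type*} [Fintype I] [DecidableEq I]
    (Ξ : Set (I → ℤ)) (hM : MNatConvex Ξ) :
    MConvex {ξ | ξ ∈ Ξ ∧ ∀ ξ' ∈ Ξ, ξ ≤ ξ' → ξ' = ξ} := by
  simp_rw [← maximal_mem_iff_forall_eq]
  intro ξ hξ ξ' hξ' i hi
  obtain ⟨j, hj, hη, hη'⟩ := hM.exists_exchange_of_maximal hξ.prop hξ' hi
  exact ⟨j, hj, hM.maximal_of_sum_eq hξ hη (sum_sub_unitv_add_unitv ξ i j),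
    hM.maximal_of_sum_eq hξ' hη' (sum_add_unitv_sub_unitv ξ' i j)⟩

/-- the set of maximal elements (w.r.t. the componentwise order) of a
nonempty finite M♮-convex set of nonnegative integer vectors is M-convex. -/
theorem maximal_of_MNatConvex_is_MConvex {I : Type*} [Fintype I] [DecidableEq I]
    (Ξ : Set (I → ℤ)) (hfin : Ξ.Finite) (hne : Ξ.Nonempty)
    (hpos : ∀ ξ ∈ Ξ, ∀ i, 0 ≤ ξ i) (hM : MNatConvex Ξ) :
    MConvex {ξ | ξ ∈ Ξ ∧ ∀ ξ' ∈ Ξ, ξ ≤ ξ' → ξ' = ξ} :=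
  maximal_of_MNatConvex_is_MConvex_general Ξ hM
end

section
/- Any two maximal elements of a nonempty finite M♮-convex set have the same coordinate sum. -/
lemma aux_max_sum {I : Type*} [Fintype I] [DecidableEq I]
    (Ξ : Set (I → ℤ)) (hM : MNatConvex Ξ)
    (ξ : I → ℤ) (hξ : ξ ∈ Ξ) (hmax : ∀ ζ ∈ Ξ, ξ ≤ ζ → ζ = ξ) :
    ∀ n : ℕ, ∀ ζ ∈ Ξ, (∑ i, max (ζ i - ξ i) 0) ≤ n → ∑ i, ζ i ≤ ∑ i, ξ i := by
  intro n
  induction n with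
  | zero =>
    intro ζ hζ hsum
    have hle : ∀ i, ζ i ≤ ξ i := by
      intro i
      by_contra h
      push_neg at h
      have h1 : (1:ℤ) ≤ max (ζ i - ξ i) 0 := le_max_of_le_left (by omega)
      have h2 : ∀ k ∈ Finset.univ, (0:ℤ) ≤ max (ζ k - ξ k) 0 := fun k _ => le_max_right _ _
      have := Finset.single_le_sum h2 (Finset.mem_univ i)
      omega
    exact Finset.sum_le_sum fun i _ => hle i
  | succ n ih =>
    intro ζ hζ hsum
    by_cases hc : ∑ i, ζ i ≤ ∑ i, ξ i
    · exact hc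
    push_neg at hc
    have hex : ∃ i, ξ i < ζ i := by
      by_contra h
      push_neg at h
      exact absurd (Finset.sum_le_sum fun i _ => h i) (not_le.2 hc)
    obtain ⟨i, hi⟩ := hex
    rcases hM ζ hζ ξ hξ i hi with ⟨h1, h2⟩ | ⟨j, hj, h1, h2⟩
    · exfalso
      have heq := hmax (ξ + unitv i) h2 (by
        intro k
        simp only [Pi.add_apply, unitv]
        split <;> omega)
      have : (ξ + unitv i) i = ξ i := by rw [heq]
      simp [unitv] at this
    · have hij : i ≠ j := by intro h; subst h; omega
      set ζ' := ζ - unitv i + unitv j with hζ'def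
      have happ : ∀ k, ζ' k = ζ k - (if k = i then 1 else 0) + (if k = j then 1 else 0) := by
        intro k; simp [hζ'def, unitv]
      have hmeas : (∑ k, max (ζ' k - ξ k) 0) ≤ n := by
        have key : (∑ k, max (ζ' k - ξ k) 0) + 1 ≤ ∑ k, max (ζ k - ξ k) 0 := by
          rw [← Finset.add_sum_erase Finset.univ (fun k => max (ζ' k - ξ k) 0) (Finset.mem_univ i),
              ← Finset.add_sum_erase Finset.univ (fun k => max (ζ k - ξ k) 0) (Finset.mem_univ i)]
          have hterm_i : max (ζ' i - ξ i) 0 + 1 ≤ max (ζ i - ξ i) 0 := by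
            have := happ i
            rw [if_pos rfl, if_neg hij] at this
            omega
          have hrest : ∑ k ∈ Finset.univ.erase i, max (ζ' k - ξ k) 0
              ≤ ∑ k ∈ Finset.univ.erase i, max (ζ k - ξ k) 0 := by
            apply Finset.sum_le_sum
            intro k hk
            have hki : k ≠ i := Finset.ne_of_mem_erase hk
            have := happ k
            rw [if_neg hki] at this
            by_cases hkj : k = j
            · subst hkj
              rw [if_pos rfl] at this
              omega
            · rw [if_neg hkj] at this
              omega
          omega
        omega
      have hsum' : ∑ k, ζ' k = ∑ k, ζ k := by
        have : ∀ k, ζ' k = ζ k - unitv i k + unitv j k := by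
          intro k; simp [hζ'def]
        simp only [this]
        rw [Finset.sum_add_distrib, Finset.sum_sub_distrib]
        have hu : ∀ m : I, ∑ k, unitv m k = 1 := by
          intro m
          simp [unitv, Finset.sum_ite_eq']
        rw [hu i, hu j]
        ring
      have := ih ζ' h1 hmeas
      omega

/-- any two maximal elements of a nonempty finite M♮-convex set of
nonnegative integer vectors have the same coordinate sum. -/
theorem maximal_same_sum_of_MNatConvex {I : Type*} [Fintype I] [DecidableEq I]
    (Ξ : Set (I → ℤ)) (hfin : Ξ.Finite) (hne : Ξ.Nonempty)
    (hpos : ∀ ξ ∈ Ξ, ∀ i, 0 ≤ ξ i) (hM : MNatConvex Ξ)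
    (ξ ξ' : I → ℤ) (hξ : ξ ∈ Ξ) (hξ' : ξ' ∈ Ξ)
    (hmax : ∀ ζ ∈ Ξ, ξ ≤ ζ → ζ = ξ) (hmax' : ∀ ζ ∈ Ξ, ξ' ≤ ζ → ζ = ξ') :
    ∑ i, ξ i = ∑ i, ξ' i := by
  have h1 := aux_max_sum Ξ hM ξ hξ hmax ((∑ i, max (ξ' i - ξ i) 0).toNat) ξ' hξ'
    (by
      have : ∀ k ∈ Finset.univ, (0:ℤ) ≤ max (ξ' k - ξ k) 0 := fun k _ => le_max_right _ _
      have := Finset.sum_nonneg this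
      omega)
  have h2 := aux_max_sum Ξ hM ξ' hξ' hmax' ((∑ i, max (ξ i - ξ' i) 0).toNat) ξ hξ
    (by
      have : ∀ k ∈ Finset.univ, (0:ℤ) ≤ max (ξ k - ξ' k) 0 := fun k _ => le_max_right _ _
      have := Finset.sum_nonneg this
      omega)
  omega
end

section
/- Every M♮-concave function on a finite domain Ξ⁰ ⊆ ℤ_{≥0}^I is ordinally concave. -/
/-- `chi j` is the unit vector at `j` for `j = some i`, and the zero vector for `j = none`. -/
def chi {I : Type*} [DecidableEq I] : Option I → I → ℤ
  | none => fun _ => 0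
  | some i => fun k => if k = i then 1 else 0

/-- `f` is M♮-concave on the domain `Ξ`. -/
def MNatConcave {I : Type*} [DecidableEq I] (Ξ : Set (I → ℤ)) (f : (I → ℤ) → ℝ) : Prop :=
  ∀ ξ ∈ Ξ, ∀ ξ' ∈ Ξ, ∀ i : I, ξ' i < ξ i →
    ∃ j : Option I, (∀ k, j = some k → ξ k < ξ' k) ∧
      ξ - chi (some i) + chi j ∈ Ξ ∧ ξ' + chi (some i) - chi j ∈ Ξ ∧
      f ξ + f ξ' ≤ f (ξ - chi (some i) + chi j) + f (ξ' + chi (some i) - chi j)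

/-- `f` is ordinally concave on the domain `Ξ`. -/
def OrdinallyConcave {I : Type*} [DecidableEq I] (Ξ : Set (I → ℤ)) (f : (I → ℤ) → ℝ) : Prop :=
  ∀ ξ ∈ Ξ, ∀ ξ' ∈ Ξ, ∀ i : I, ξ' i < ξ i →
    ∃ j : Option I, (∀ k, j = some k → ξ k < ξ' k) ∧
      ξ - chi (some i) + chi j ∈ Ξ ∧ ξ' + chi (some i) - chi j ∈ Ξ ∧
      (f ξ < f (ξ - chi (some i) + chi j) ∨
        f ξ' < f (ξ' + chi (some i) - chi j) ∨
        (f (ξ' + chi (some i) - chi j) = f ξ' ∧ f (ξ - chi (some i) + chi j) = f ξ))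

/-- every M♮-concave function on a finite domain of nonnegative
integer vectors is ordinally concave. -/
theorem ordinallyConcave_of_MNatConcave {I : Type*} [Fintype I] [DecidableEq I]
    (Ξ : Set (I → ℤ)) (hfin : Ξ.Finite) (hpos : ∀ ξ ∈ Ξ, ∀ i, 0 ≤ ξ i)
    (f : (I → ℤ) → ℝ) (hM : MNatConcave Ξ f) : OrdinallyConcave Ξ f := by
  intro ξ hξ ξ' hξ' i hi
  obtain ⟨j, h1, h2, h3, h4⟩ := hM ξ hξ ξ' hξ' i hi
  refine ⟨j, h1, h2, h3, ?_⟩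
  rcases lt_or_ge (f ξ) (f (ξ - chi (some i) + chi j)) with h | h
  · exact Or.inl h
  rcases lt_or_ge (f ξ') (f (ξ' + chi (some i) - chi j)) with h' | h'
  · exact Or.inr (Or.inl h')
  exact Or.inr (Or.inr ⟨by linarith, by linarith⟩)
end

section
/- There exists an ordinally concave function that is not M♮-concave; specifically, the function f on {0,1,2} ⊆ ℤ with f(0)=0, f(1)=3, f(2)=10 is ordinally concave but not M♮-concave. -/
/-- One-dimensional ordinal concavity of `f` on the domain `D ⊆ ℤ`. -/
def OrdinallyConcave1 (D : Set ℤ) (f : ℤ → ℝ) : Prop :=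
  ∀ ξ ∈ D, ∀ ξ' ∈ D, ξ' < ξ →
    (f ξ < f (ξ - 1) ∨ f ξ' < f (ξ' + 1) ∨ (f (ξ - 1) = f ξ ∧ f (ξ' + 1) = f ξ'))

/-- One-dimensional M♮-concavity of `f` on the domain `D ⊆ ℤ`. -/
def MNatConcave1 (D : Set ℤ) (f : ℤ → ℝ) : Prop :=
  ∀ ξ ∈ D, ∀ ξ' ∈ D, ξ' < ξ →
    ξ - 1 ∈ D ∧ ξ' + 1 ∈ D ∧ f ξ + f ξ' ≤ f (ξ - 1) + f (ξ' + 1)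

/-- the function on `{0,1,2}` with values `0, 3, 10` is ordinally
concave but not M♮-concave. -/
theorem ordinallyConcave_not_MNatConcave :
    ∀ f : ℤ → ℝ, f 0 = 0 → f 1 = 3 → f 2 = 10 →
      OrdinallyConcave1 ({0, 1, 2} : Set ℤ) f ∧
        ¬ MNatConcave1 ({0, 1, 2} : Set ℤ) f := by
  intro f h0 h1 h2
  constructor
  · intro ξ hξ ξ' hξ' hlt
    simp only [Set.mem_insert_iff, Set.mem_singleton_iff] at hξ hξ'
    rcases hξ with rfl | rfl | rfl <;> rcases hξ' with rfl | rfl | rfl <;>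
      simp_all <;> norm_num
  · intro h
    have := (h 2 (by simp) 0 (by simp) (by norm_num)).2.2
    norm_num [h0, h1, h2] at this
end

section
/- Maximizer-cut theorem (one direction): Let f be ordinally concave on Ξ⁰ and ξ ∈ Ξ⁰. Suppose coordinate i maximizes f(ξ + χ_j) over j ∈ I ∪ {∅} (among feasible moves), and that f(ξ + χ_i) ≥ f(ξ). If ξ is not a maximizer of f, then there exists a maximizer ξ* of f over Ξ⁰ with ξ*_i ≥ ξ_i + 1. -/
section MaximizerCut

variable {I : Type*} [DecidableEq I]

@[simp]
theorem chi_none : chi none = (0 : I → ℤ) := rfl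

theorem chi_some_apply (i k : I) : chi (some i) k = if k = i then 1 else 0 := rfl

def l1Dist [Fintype I] (ζ η : I → ℤ) : ℤ := ∑ k, |ζ k - η k|

theorem abs_exchange_sub_le {ζ η : I → ℤ} {i : I} {j : Option I} (hi : ζ i < η i)
    (hj : ∀ k, j = some k → η k < ζ k) (k : I) :
    |(ζ + chi (some i) - chi j) k - η k| ≤ |ζ k - η k| := by
  rcases j with _ | j
  · simp only [Pi.add_apply, Pi.sub_apply, chi_some_apply, chi_none, Pi.zero_apply]
    split_ifs with hk
    · subst hk; rw [abs_of_nonpos (by omega), abs_of_neg (by omega)]; omega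
    · simp
  · have hji := hj j rfl
    simp only [Pi.add_apply, Pi.sub_apply, chi_some_apply]
    split_ifs with hk hk' hk'
    · subst hk hk'; omega
    · subst hk; rw [abs_of_nonpos (by omega), abs_of_neg (by omega)]; omega
    · subst hk'; rw [abs_of_nonneg (by omega), abs_of_pos (by omega)]; omega
    · simp

theorem l1Dist_exchange_lt [Fintype I] {ζ η : I → ℤ} {i : I} {j : Option I} (hi : ζ i < η i)
    (hj : ∀ k, j = some k → η k < ζ k) :
    l1Dist (ζ + chi (some i) - chi j) η < l1Dist ζ η := by
  refine Finset.sum_lt_sum (fun k _ => abs_exchange_sub_le hi hj k) ⟨i, Finset.mem_univ i, ?_⟩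
  have hji : chi j i = 0 := by
    rcases j with _ | j
    · rfl
    · have := hj j rfl
      rw [chi_some_apply, if_neg (by rintro rfl; omega)]
  simp only [Pi.add_apply, Pi.sub_apply, chi_some_apply, hji, if_true]
  rw [abs_of_nonpos (by omega), abs_of_neg (by omega)]
  omega

variable {Ξ : Set (I → ℤ)} {f : (I → ℤ) → ℝ}

theorem OrdinallyConcave.exists_isMaxOn_l1Dist_lt [Fintype I] (hf : OrdinallyConcave Ξ f)
    {η : I → ℤ} (hη : η ∈ Ξ) {i : I}
    (hloc : ∀ j, η - chi (some i) + chi j ∈ Ξ → f (η - chi (some i) + chi j) ≤ f η)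
    {ζ : I → ℤ} (hζ : ζ ∈ Ξ) (hζmax : IsMaxOn f Ξ ζ) (hζi : ζ i < η i) :
    ∃ ζ' ∈ Ξ, IsMaxOn f Ξ ζ' ∧ l1Dist ζ' η < l1Dist ζ η := by
  obtain ⟨j, hj, hηj, hζj, hcases⟩ := hf η hη ζ hζ i hζi
  rcases hcases with hlt | hlt | ⟨hζeq, -⟩
  · exact absurd (hloc j hηj) hlt.not_ge
  · exact absurd (isMaxOn_iff.mp hζmax _ hζj) hlt.not_ge
  · refine ⟨_, hζj, isMaxOn_iff.mpr fun x hx => ?_, l1Dist_exchange_lt hζi hj⟩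
    exact (isMaxOn_iff.mp hζmax x hx).trans hζeq.ge

theorem OrdinallyConcave.exists_isMaxOn_le_apply [Fintype I] (hf : OrdinallyConcave Ξ f)
    (hfin : Ξ.Finite) {η : I → ℤ} (hη : η ∈ Ξ) {i : I}
    (hloc : ∀ j, η - chi (some i) + chi j ∈ Ξ → f (η - chi (some i) + chi j) ≤ f η) :
    ∃ ξs ∈ Ξ, IsMaxOn f Ξ ξs ∧ η i ≤ ξs i := by
  set M := {ζ ∈ Ξ | IsMaxOn f Ξ ζ}
  have hMne : M.Nonempty := by
    obtain ⟨ζ, hζ, hmax⟩ := Set.exists_max_image Ξ f hfin ⟨η, hη⟩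
    exact ⟨ζ, hζ, isMaxOn_iff.mpr hmax⟩
  obtain ⟨ξs, ⟨hξs, hξsmax⟩, hclosest⟩ :=
    Set.exists_min_image M (l1Dist · η) (hfin.subset fun _ h => h.1) hMne
  refine ⟨ξs, hξs, hξsmax, not_lt.mp fun hlt => ?_⟩
  obtain ⟨ζ', hζ', hζ'max, hcloser⟩ := hf.exists_isMaxOn_l1Dist_lt hη hloc hξs hξsmax hlt
  exact (hclosest ζ' ⟨hζ', hζ'max⟩).not_gt hcloser

end MaximizerCut

theorem maximizer_cut_general {I : Type*} [Fintype I] [DecidableEq I]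
    (Ξ : Set (I → ℤ)) (hfin : Ξ.Finite)
    (f : (I → ℤ) → ℝ) (hf : OrdinallyConcave Ξ f)
    (ξ : I → ℤ) (i : I) (hi : ξ + chi (some i) ∈ Ξ)
    (hmaxmove : ∀ j j' : Option I, ξ - chi j' + chi j ∈ Ξ →
      f (ξ - chi j' + chi j) ≤ f (ξ + chi (some i))) :
    ∃ ξs ∈ Ξ, (∀ ζ ∈ Ξ, f ζ ≤ f ξs) ∧ ξ i + 1 ≤ ξs i := by
  have hloc : ∀ j, ξ + chi (some i) - chi (some i) + chi j ∈ Ξ →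
      f (ξ + chi (some i) - chi (some i) + chi j) ≤ f (ξ + chi (some i)) := by
    simpa using fun j => hmaxmove j none
  obtain ⟨ξs, hξs, hξsmax, hle⟩ := hf.exists_isMaxOn_le_apply hfin hi hloc
  refine ⟨ξs, hξs, isMaxOn_iff.mp hξsmax, ?_⟩
  simpa [chi_some_apply] using hle

/-- maximizer-cut theorem, one direction: if
`f (ξ + χ_i) = max_{j, j'} f (ξ - χ_{j'} + χ_j)` over feasible moves, this maximum is
at least `f ξ`, and `ξ` is not a maximizer of `f` over `Ξ`, then there is a maximizer
`ξ*` of `f` over `Ξ` with `ξ*_i ≥ ξ_i + 1`. -/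
theorem maximizer_cut {I : Type*} [Fintype I] [DecidableEq I]
    (Ξ : Set (I → ℤ)) (hfin : Ξ.Finite) (hpos : ∀ ξ ∈ Ξ, ∀ i, 0 ≤ ξ i)
    (f : (I → ℤ) → ℝ) (hf : OrdinallyConcave Ξ f)
    (ξ : I → ℤ) (hξ : ξ ∈ Ξ) (i : I) (hi : ξ + chi (some i) ∈ Ξ)
    (hmaxmove : ∀ j j' : Option I, ξ - chi j' + chi j ∈ Ξ →
      f (ξ - chi j' + chi j) ≤ f (ξ + chi (some i)))
    (hge : f ξ ≤ f (ξ + chi (some i)))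
    (hnotmax : ¬ ∀ ζ ∈ Ξ, f ζ ≤ f ξ) :
    ∃ ξs ∈ Ξ, (∀ ζ ∈ Ξ, f ζ ≤ f ξs) ∧ ξ i + 1 ≤ ξs i :=
  maximizer_cut_general Ξ hfin f hf ξ i hi hmaxmove
end

section
/- A choice rule is path independent if and only if it satisfies the irrelevance of rejected contracts condition and the substitutes condition. -/
/-- a choice rule is path independent if and only if it satisfies the
irrelevance of rejected contracts condition and the substitutes condition. -/
theorem pathIndependent_iff_irc_and_substitutes {α : Type*} [DecidableEq α] [Fintype α]
    (C : Finset α → Finset α) (hC : ∀ A, C A ⊆ A) :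
    (∀ A B : Finset α, C (A ∪ B) = C (C A ∪ B)) ↔
      ((∀ A : Finset α, ∀ x ∉ A, x ∉ C (insert x A) → C (insert x A) = C A) ∧
        (∀ A : Finset α, ∀ x ∉ A, C (insert x A) ∩ A ⊆ C A)) := by
  constructor
  · intro hPI
    constructor
    · intro A x hx hxc
      have h1 : C (insert x A ∪ A) = C (C (insert x A) ∪ A) := hPI _ _
      have h2 : insert x A ∪ A = insert x A := by
        ext y; simp [Finset.mem_insert, or_comm, or_assoc]
      have h3 : C (insert x A) ∪ A = A := by
        rw [Finset.union_eq_right]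
        intro y hy
        rcases Finset.mem_insert.mp (hC _ hy) with h | h
        · exact absurd (h ▸ hy) hxc
        · exact h
      rw [h2, h3] at h1
      exact h1
    · intro A x hx y hy
      simp only [Finset.mem_inter] at hy
      have h1 : C (A ∪ {x}) = C (C A ∪ {x}) := hPI A {x}
      have h2 : A ∪ {x} = insert x A := by
        ext z; simp [Finset.mem_insert, or_comm]
      rw [h2] at h1
      have hy' : y ∈ C (C A ∪ {x}) := h1 ▸ hy.1
      rcases Finset.mem_union.mp (hC _ hy') with h | h
      · exact h
      · simp only [Finset.mem_singleton] at h
        exact absurd (h ▸ hy.2) hx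
  · rintro ⟨hirc, hsub⟩
    have sub_ext : ∀ n (A B : Finset α), A ⊆ B → (B \ A).card = n → C B ∩ A ⊆ C A := by
      intro n
      induction n with
      | zero =>
        intro A B hAB h
        have hBA : B ⊆ A := by
          intro y hy
          by_contra hyA
          have : y ∈ B \ A := Finset.mem_sdiff.mpr ⟨hy, hyA⟩
          rw [Finset.card_eq_zero.mp h] at this
          exact absurd this (Finset.notMem_empty y)
        have : A = B := Finset.Subset.antisymm hAB hBA
        rw [this]
        exact Finset.inter_subset_left
      | succ n ih =>
        intro A B hAB h
        have hne : (B \ A).Nonempty := by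
          rw [← Finset.card_pos, h]; omega
        obtain ⟨x, hx⟩ := hne
        obtain ⟨hxB, hxA⟩ := Finset.mem_sdiff.mp hx
        set B' := B.erase x with hB'
        have hins : insert x B' = B := Finset.insert_erase hxB
        have hxB' : x ∉ B' := Finset.notMem_erase x B
        have hstep : C B ∩ B' ⊆ C B' := by
          have := hsub B' x hxB'
          rwa [hins] at this
        have hAB' : A ⊆ B' := fun y hy =>
          Finset.mem_erase.mpr ⟨fun he => hxA (he ▸ hy), hAB hy⟩
        have hcard : (B' \ A).card = n := by
          have : B' \ A = (B \ A).erase x := by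
            ext y
            simp only [hB', Finset.mem_sdiff, Finset.mem_erase]
            tauto
          rw [this, Finset.card_erase_of_mem hx, h]; omega
        intro y hy
        obtain ⟨hy1, hy2⟩ := Finset.mem_inter.mp hy
        exact ih A B' hAB' hcard
          (Finset.mem_inter.mpr ⟨hstep (Finset.mem_inter.mpr ⟨hy1, hAB' hy2⟩), hy2⟩)
    have irc_ext : ∀ n (A B : Finset α), C B ⊆ A → A ⊆ B → (B \ A).card = n → C A = C B := by
      intro n
      induction n with
      | zero =>
        intro A B hCB hAB h
        have hBA : B ⊆ A := by
          intro y hy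
          by_contra hyA
          have : y ∈ B \ A := Finset.mem_sdiff.mpr ⟨hy, hyA⟩
          rw [Finset.card_eq_zero.mp h] at this
          exact absurd this (Finset.notMem_empty y)
        rw [Finset.Subset.antisymm hAB hBA]
      | succ n ih =>
        intro A B hCB hAB h
        have hne : (B \ A).Nonempty := by
          rw [← Finset.card_pos, h]; omega
        obtain ⟨x, hx⟩ := hne
        obtain ⟨hxB, hxA⟩ := Finset.mem_sdiff.mp hx
        set B' := B.erase x with hB'
        have hins : insert x B' = B := Finset.insert_erase hxB
        have hxB' : x ∉ B' := Finset.notMem_erase x B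
        have hxCB : x ∉ C B := fun hc => hxA (hCB hc)
        have hstep : C B = C B' := by
          have := hirc B' x hxB' (by rwa [hins])
          rwa [hins] at this
        have hAB' : A ⊆ B' := fun y hy =>
          Finset.mem_erase.mpr ⟨fun he => hxA (he ▸ hy), hAB hy⟩
        have hcard : (B' \ A).card = n := by
          have : B' \ A = (B \ A).erase x := by
            ext y
            simp only [hB', Finset.mem_sdiff, Finset.mem_erase]
            tauto
          rw [this, Finset.card_erase_of_mem hx, h]; omega
        rw [ih A B' (hstep ▸ hCB) hAB' hcard, hstep]
    intro A B
    have hTS : C A ∪ B ⊆ A ∪ B := Finset.union_subset_union_left (hC A)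
    have hCS : C (A ∪ B) ⊆ C A ∪ B := by
      intro y hy
      rcases Finset.mem_union.mp (hC _ hy) with h | h
      · exact Finset.mem_union_left _
          (sub_ext _ A (A ∪ B) Finset.subset_union_left rfl
            (Finset.mem_inter.mpr ⟨hy, h⟩))
      · exact Finset.mem_union_right _ h
    exact (irc_ext _ (C A ∪ B) (A ∪ B) hCS hTS rfl).symm
end

section
/- If for every λ ≥ 0 the truncated function f_λ defined by f_λ(ξ) = min{f(ξ), λ} is ordinally concave, then f is pseudo M♮-concave. -/
/-- `f` is pseudo M♮-concave on the domain `Ξ`. -/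
def PseudoMNatConcave {I : Type*} [DecidableEq I] (Ξ : Set (I → ℤ)) (f : (I → ℤ) → ℝ) : Prop :=
  ∀ ξ ∈ Ξ, ∀ ξ' ∈ Ξ, ∀ i : I, ξ' i < ξ i →
    ∃ j : Option I, (∀ k, j = some k → ξ k < ξ' k) ∧
      ξ - chi (some i) + chi j ∈ Ξ ∧ ξ' + chi (some i) - chi j ∈ Ξ ∧
      min (f ξ) (f ξ') ≤
        min (f (ξ - chi (some i) + chi j)) (f (ξ' + chi (some i) - chi j))

/-- if for every `λ ≥ 0` the truncation `f_λ = min {f, λ}` is ordinally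
concave, then `f` is pseudo M♮-concave. -/
theorem pseudoMNatConcave_of_truncations_ordinallyConcave {I : Type*} [Fintype I]
    [DecidableEq I] (Ξ : Set (I → ℤ)) (hfin : Ξ.Finite)
    (hpos : ∀ ξ ∈ Ξ, ∀ i, 0 ≤ ξ i)
    (f : (I → ℤ) → ℝ) (hfnn : ∀ ξ ∈ Ξ, 0 ≤ f ξ)
    (htrunc : ∀ l : ℝ, 0 ≤ l → OrdinallyConcave Ξ (fun ξ => min (f ξ) l)) :
    PseudoMNatConcave Ξ f := by
  intro ξ hξ ξ' hξ' i hi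
  set l := min (f ξ) (f ξ') with hl
  have hl0 : 0 ≤ l := le_min (hfnn ξ hξ) (hfnn ξ' hξ')
  obtain ⟨j, hj, h1, h2, h3⟩ := htrunc l hl0 ξ hξ ξ' hξ' i hi
  refine ⟨j, hj, h1, h2, ?_⟩
  simp only at h3
  have e1 : min (f ξ) l = l := min_eq_right (min_le_left _ _)
  have e2 : min (f ξ') l = l := min_eq_right (min_le_right _ _)
  rcases h3 with h | h | ⟨ha, hb⟩
  · rw [e1] at h; exact absurd h (not_lt.2 (min_le_right _ _))
  · rw [e2] at h; exact absurd h (not_lt.2 (min_le_right _ _))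
  · rw [e2] at ha; rw [e1] at hb
    exact le_min (min_eq_right_iff.mp hb) (min_eq_right_iff.mp ha)
end

section
/- Semistrict pseudo M♮-concavity implies pseudo M♮-concavity⁺. -/
/-- `f` is semistrictly pseudo M♮-concave on `Ξ`: the minimum function value weakly
increases when `ξ` and `ξ'` move toward each other, strictly so whenever
`f ξ ≠ f ξ'` and the moved vector `ξ - χ_i + χ_j` differs from `ξ'`. -/
def SemistrictPseudoMNatConcave {I : Type*} [DecidableEq I] (Ξ : Set (I → ℤ))
    (f : (I → ℤ) → ℝ) : Prop :=
  ∀ ξ ∈ Ξ, ∀ ξ' ∈ Ξ, ∀ i : I, ξ' i < ξ i →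
    ∃ j : Option I, (∀ k, j = some k → ξ k < ξ' k) ∧
      ξ - chi (some i) + chi j ∈ Ξ ∧ ξ' + chi (some i) - chi j ∈ Ξ ∧
      min (f ξ) (f ξ') ≤
        min (f (ξ - chi (some i) + chi j)) (f (ξ' + chi (some i) - chi j)) ∧
      (f ξ ≠ f ξ' → ξ - chi (some i) + chi j ≠ ξ' →
        min (f ξ) (f ξ') <
          min (f (ξ - chi (some i) + chi j)) (f (ξ' + chi (some i) - chi j)))

/-- `f` is pseudo M♮-concave⁺ on `Ξ`: pseudo M♮-concavity holds via some `j`, and in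
addition conditions (A) and (B) hold for this `j`. -/
def PseudoMNatConcavePlus {I : Type*} [DecidableEq I] (Ξ : Set (I → ℤ))
    (f : (I → ℤ) → ℝ) : Prop :=
  ∀ ξ ∈ Ξ, ∀ ξ' ∈ Ξ, ∀ i : I, ξ' i < ξ i →
    ∃ j : Option I, (∀ k, j = some k → ξ k < ξ' k) ∧
      ξ - chi (some i) + chi j ∈ Ξ ∧ ξ' + chi (some i) - chi j ∈ Ξ ∧
      min (f ξ) (f ξ') ≤
        min (f (ξ - chi (some i) + chi j)) (f (ξ' + chi (some i) - chi j)) ∧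
      (f (ξ - chi (some i) + chi j) < f ξ → f (ξ' + chi (some i) - chi j) = f ξ' →
        ∃ j'' : Option I, (∀ k, j'' = some k → ξ k < ξ' k) ∧
          ξ' + chi (some i) - chi j'' ∈ Ξ ∧ f ξ' < f (ξ' + chi (some i) - chi j'')) ∧
      (f (ξ' + chi (some i) - chi j) < f ξ' → f (ξ - chi (some i) + chi j) = f ξ →
        ∃ j'' : Option I, (∀ k, j'' = some k → ξ k < ξ' k) ∧
          ξ - chi (some i) + chi j'' ∈ Ξ ∧ f ξ < f (ξ - chi (some i) + chi j''))

/-- semistrict pseudo M♮-concavity implies pseudo M♮-concavity⁺. -/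
theorem pseudoMNatConcavePlus_of_semistrict {I : Type*} [Fintype I] [DecidableEq I]
    (Ξ : Set (I → ℤ)) (hpos : ∀ ξ ∈ Ξ, ∀ i, 0 ≤ ξ i)
    (f : (I → ℤ) → ℝ) (hfnn : ∀ ξ ∈ Ξ, 0 ≤ f ξ)
    (hss : SemistrictPseudoMNatConcave Ξ f) :
    PseudoMNatConcavePlus Ξ f := by
  intro ξ hξ ξ' hξ' i hi
  obtain ⟨j, hj1, hj2, hj3, hweak, hstrict⟩ := hss ξ hξ ξ' hξ' i hi
  set a := ξ - chi (some i) + chi j with ha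
  set b := ξ' + chi (some i) - chi j with hb
  refine ⟨j, hj1, hj2, hj3, hweak, ?_, ?_⟩
  · intro h1 h2
    exfalso
    have hma : min (f ξ) (f ξ') ≤ f a := hweak.trans (min_le_left _ _)
    have hlt : min (f ξ) (f ξ') < f ξ := lt_of_le_of_lt hma h1
    have hne : f ξ' < f ξ := by
      by_contra h
      push_neg at h
      rw [min_eq_left h] at hlt
      exact lt_irrefl _ hlt
    by_cases heq : a = ξ'
    · have hbe : b = ξ := by
        rw [hb, ← heq, ha]; abel
      rw [← hb, hbe] at h2
      exact absurd h2 (ne_of_gt hne)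
    · have := hstrict (ne_of_gt hne) heq
      have hmb : min (f ξ) (f ξ') < f b := this.trans_le (min_le_right _ _)
      rw [h2] at hmb
      have : min (f ξ) (f ξ') = f ξ' := min_eq_right (le_of_lt hne)
      linarith [this ▸ hmb]
  · intro h1 h2
    exfalso
    have hmb : min (f ξ) (f ξ') ≤ f b := hweak.trans (min_le_right _ _)
    have hlt : min (f ξ) (f ξ') < f ξ' := lt_of_le_of_lt hmb h1
    have hne : f ξ < f ξ' := by
      by_contra h
      push_neg at h
      rw [min_eq_right h] at hlt
      exact lt_irrefl _ hlt
    by_cases heq : a = ξ'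
    · rw [← ha, heq] at h2
      exact absurd h2.symm (ne_of_lt hne)
    · have := hstrict (ne_of_lt hne) heq
      have hma : min (f ξ) (f ξ') < f a := this.trans_le (min_le_left _ _)
      rw [h2] at hma
      have : min (f ξ) (f ξ') = f ξ := min_eq_left (le_of_lt hne)
      linarith [this ▸ hma]
end
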